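/- arXiv:1411.0965 — 9 statements merged into one kernel-verified Lean document; each statement's English description precedes it below -/
import Mathlib

section
/- Let p ≥ 2 be an integer. For every complex number c in the Multibrot set M^p, one has |c| ≤ 2^(1/(p−1)). -/
/-!
If `r = ‖c‖` satisfies `r ^ (p - 1) > 2`, then every `z` with `‖z‖ ≥ r` is pushed outward:
`‖z ^ p + c‖ ≥ ‖z‖ ^ p - r ≥ ‖z‖ (r ^ (p - 1) - 1)`, and `r ^ (p - 1) - 1 > 1`. The critical orbit
starts at `c` itself, so it grows at least geometrically and is unbounded.
-/

open Filter

section Escape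

variable {𝕜 : Type*} [NormedDivisionRing 𝕜] {p : ℕ} {c : 𝕜}

theorem mul_pow_pred_sub_one_le_norm_pow_add (hp : 1 ≤ p) {z : 𝕜} (hz : ‖c‖ ≤ ‖z‖) :
    ‖z‖ * (‖c‖ ^ (p - 1) - 1) ≤ ‖z ^ p + c‖ := by
  have hpow : ‖c‖ ^ (p - 1) ≤ ‖z‖ ^ (p - 1) := pow_le_pow_left₀ (norm_nonneg c) hz _
  calc ‖z‖ * (‖c‖ ^ (p - 1) - 1)
      ≤ ‖z‖ * ‖z‖ ^ (p - 1) - ‖c‖ := by nlinarith [norm_nonneg z]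
    _ = ‖z ^ p‖ - ‖-c‖ := by rw [norm_neg, norm_pow, ← pow_succ', Nat.sub_add_cancel hp]
    _ ≤ ‖z ^ p - -c‖ := norm_sub_norm_le _ _
    _ = ‖z ^ p + c‖ := by rw [sub_neg_eq_add]

theorem norm_mul_pow_le_norm_iterate_succ_zero (hp : 1 ≤ p) (hq : 1 ≤ ‖c‖ ^ (p - 1) - 1)
    (m : ℕ) : ‖c‖ * (‖c‖ ^ (p - 1) - 1) ^ m ≤ ‖(fun z : 𝕜 => z ^ p + c)^[m + 1] 0‖ := by
  induction m with
  | zero => simp [zero_pow (Nat.one_le_iff_ne_zero.mp hp)]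
  | succ m ih =>
    have hlarge : ‖c‖ ≤ ‖(fun z : 𝕜 => z ^ p + c)^[m + 1] 0‖ :=
      (le_mul_of_one_le_right (norm_nonneg c) (one_le_pow₀ hq)).trans ih
    rw [Function.iterate_succ_apply']
    calc ‖c‖ * (‖c‖ ^ (p - 1) - 1) ^ (m + 1)
        = ‖c‖ * (‖c‖ ^ (p - 1) - 1) ^ m * (‖c‖ ^ (p - 1) - 1) := by ring
      _ ≤ ‖(fun z : 𝕜 => z ^ p + c)^[m + 1] 0‖ * (‖c‖ ^ (p - 1) - 1) :=
        mul_le_mul_of_nonneg_right ih (by linarith)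
      _ ≤ _ := mul_pow_pred_sub_one_le_norm_pow_add hp hlarge

theorem tendsto_norm_iterate_zero_atTop (hp : 1 ≤ p) (hc : 2 < ‖c‖ ^ (p - 1)) :
    Tendsto (fun m => ‖(fun z : 𝕜 => z ^ p + c)^[m] 0‖) atTop atTop := by
  have hc_pos : 0 < ‖c‖ := by
    by_contra! hle
    linarith [pow_le_one₀ (norm_nonneg c) (hle.trans zero_le_one) (n := p - 1)]
  have hgeom : Tendsto (fun m : ℕ => ‖c‖ * (‖c‖ ^ (p - 1) - 1) ^ m) atTop atTop :=
    (tendsto_pow_atTop_atTop_of_one_lt (by linarith)).const_mul_atTop hc_pos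
  refine (tendsto_add_atTop_iff_nat 1).mp (tendsto_atTop_mono ?_ hgeom)
  exact norm_mul_pow_le_norm_iterate_succ_zero hp (by linarith)

end Escape

theorem lt_pow_of_rpow_one_div_lt {x y : ℝ} {n : ℕ} (hn : n ≠ 0) (hx : 0 ≤ x) (hy : 0 ≤ y)
    (h : x ^ ((1 : ℝ) / n) < y) : x < y ^ n := by
  rwa [one_div, Real.rpow_inv_lt_iff_of_pos hx hy (by positivity), Real.rpow_natCast] at h

theorem multibrot_bounded_by_radius (p : ℕ) (hp : 2 ≤ p) (c : ℂ)
    (hc : ∃ M : ℝ, ∀ m : ℕ, 1 ≤ m → ‖(fun z : ℂ => z ^ p + c)^[m] 0‖ ≤ M) :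
    ‖c‖ ≤ (2 : ℝ) ^ ((1 : ℝ) / ((p : ℝ) - 1)) := by
  obtain ⟨M, hM⟩ := hc
  by_contra! hlt
  have hc2 : 2 < ‖c‖ ^ (p - 1) := lt_pow_of_rpow_one_div_lt (by omega) zero_le_two
    (norm_nonneg c) (by rwa [Nat.cast_pred (by omega)])
  obtain ⟨m, hmM, hm⟩ := (((tendsto_norm_iterate_zero_atTop (by omega) hc2).eventually_gt_atTop
    M).and (eventually_ge_atTop 1)).exists
  exact (hM m hm).not_gt hmM
end

section
/- Let p ≥ 2 be an integer and c ∈ ℂ with |c| ≤ 2^(1/(p−1)). Suppose there exists an integer n ≥ 1 and δ > 0 such that |Q_{p,c}^n(0)| = 2^(1/(p−1)) + δ. Then for every natural number m ≥ 1, |Q_{p,c}^{n+m}(0)| ≥ 2^(1/(p−1)) + (2p)^m·δ. -/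
/-!
Put `r = 2 ^ (1 / (p - 1))`, so that `r ^ p = 2 * r`. If `‖z‖ ≥ r + ε` with `ε ≥ 0` and
`‖c‖ ≤ r`, Bernoulli's inequality `(r + ε) ^ p ≥ r ^ p + p * r ^ (p - 1) * ε` gives
`‖z ^ p + c‖ ≥ (r + ε) ^ p - r ≥ r + 2 * p * ε`: the excess over the escape radius `r` is
multiplied by at least `2 * p` at every step of the orbit.
-/

lemma rpow_one_div_sub_one_pow_sub_one {a : ℝ} (ha : 0 ≤ a) {p : ℕ} (hp : 1 < p) :
    (a ^ (1 / ((p : ℝ) - 1))) ^ (p - 1) = a := by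
  have hcast : (p : ℝ) - 1 = ((p - 1 : ℕ) : ℝ) := by
    rw [Nat.cast_sub hp.le, Nat.cast_one]
  rw [hcast, one_div]
  exact Real.rpow_inv_natCast_pow ha (by omega)

section EscapeRadius

variable {𝕜 : Type*} [NormedDivisionRing 𝕜] {p : ℕ} {r ε : ℝ} {c : 𝕜}

lemma add_two_mul_mul_le_norm_pow_add (hr : 0 ≤ r) (hrp : r ^ (p - 1) = 2) (hc : ‖c‖ ≤ r)
    (hε : 0 ≤ ε) {z : 𝕜} (hz : r + ε ≤ ‖z‖) : r + 2 * p * ε ≤ ‖z ^ p + c‖ := by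
  have hrp' : r ^ p = 2 * r := by
    have hp : 1 ≤ p := Nat.one_le_iff_ne_zero.mpr (by rintro rfl; norm_num at hrp)
    rw [← Nat.sub_add_cancel hp, pow_succ, hrp]
  calc r + 2 * p * ε = r ^ p + p * r ^ (p - 1) * ε - r := by rw [hrp', hrp]; ring
    _ ≤ (r + ε) ^ p - ‖c‖ := sub_le_sub (pow_add_mul_le_add_pow hr (by linarith) p) hc
    _ ≤ ‖z‖ ^ p - ‖c‖ := by gcongr
    _ = ‖z ^ p‖ - ‖-c‖ := by rw [norm_pow, norm_neg]
    _ ≤ ‖z ^ p - -c‖ := norm_sub_norm_le _ _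
    _ = ‖z ^ p + c‖ := by rw [sub_neg_eq_add]

lemma add_pow_mul_le_norm_iterate_pow_add (hr : 0 ≤ r) (hrp : r ^ (p - 1) = 2)
    (hc : ‖c‖ ≤ r) (hε : 0 ≤ ε) {z : 𝕜} (hz : r + ε ≤ ‖z‖) (m : ℕ) :
    r + (2 * p) ^ m * ε ≤ ‖(fun w : 𝕜 => w ^ p + c)^[m] z‖ := by
  induction m with
  | zero => simpa using hz
  | succ m ih =>
    rw [Function.iterate_succ_apply', pow_succ', mul_assoc]
    exact add_two_mul_mul_le_norm_pow_add hr hrp hc (by positivity) ih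

end EscapeRadius

theorem multibrot_escape_after_exceeding_general (p : ℕ) (hp : 2 ≤ p) (c : ℂ)
    (hc : ‖c‖ ≤ (2 : ℝ) ^ ((1 : ℝ) / ((p : ℝ) - 1)))
    (n : ℕ) (δ : ℝ) (hδ : 0 < δ)
    (hQn : ‖(fun z : ℂ => z ^ p + c)^[n] 0‖ =
      (2 : ℝ) ^ ((1 : ℝ) / ((p : ℝ) - 1)) + δ) :
    ∀ m : ℕ, 1 ≤ m →
      (2 : ℝ) ^ ((1 : ℝ) / ((p : ℝ) - 1)) + (2 * (p : ℝ)) ^ m * δ ≤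
        ‖(fun z : ℂ => z ^ p + c)^[n + m] 0‖ := by
  intro m _
  rw [add_comm n m, Function.iterate_add_apply]
  exact add_pow_mul_le_norm_iterate_pow_add (by positivity)
    (rpow_one_div_sub_one_pow_sub_one zero_le_two hp) hc hδ.le hQn.ge m

theorem multibrot_escape_after_exceeding (p : ℕ) (hp : 2 ≤ p) (c : ℂ)
    (hc : ‖c‖ ≤ (2 : ℝ) ^ ((1 : ℝ) / ((p : ℝ) - 1)))
    (n : ℕ) (hn : 1 ≤ n) (δ : ℝ) (hδ : 0 < δ)
    (hQn : ‖(fun z : ℂ => z ^ p + c)^[n] 0‖ =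
      (2 : ℝ) ^ ((1 : ℝ) / ((p : ℝ) - 1)) + δ) :
    ∀ m : ℕ, 1 ≤ m →
      (2 : ℝ) ^ ((1 : ℝ) / ((p : ℝ) - 1)) + (2 * (p : ℝ)) ^ m * δ ≤
        ‖(fun z : ℂ => z ^ p + c)^[n + m] 0‖ :=
  multibrot_escape_after_exceeding_general p hp c hc n δ hδ hQn
end

section
/- Let p ≥ 2 be an integer. A complex number c belongs to the Multibrot set M^p if and only if |Q_{p,c}^m(0)| ≤ 2^(1/(p−1)) for every natural number m ≥ 1. -/
/-! Once an orbit point `z` satisfies `‖c‖ ≤ ‖z‖` and `‖z‖ ^ (p - 1) > 2`, each further step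
multiplies the norm by at least `‖z‖ ^ (p - 1) - 1 > 1`, so the orbit escapes to infinity.
If some `|Q^m(0)|` exceeds `2 ^ (1 / (p - 1))`, then this point or `Q(0) = c`, whichever is
larger, is such a `z`. -/

namespace Multibrot

variable {𝕜 : Type*} [NormedDivisionRing 𝕜] {n : ℕ} {c : 𝕜}

theorem mul_norm_le_norm_pow_succ_add {w : 𝕜} (hc : ‖c‖ ≤ ‖w‖) :
    (‖w‖ ^ n - 1) * ‖w‖ ≤ ‖w ^ (n + 1) + c‖ :=
  calc (‖w‖ ^ n - 1) * ‖w‖ = ‖w ^ (n + 1)‖ - ‖w‖ := by rw [norm_pow, pow_succ]; ring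
    _ ≤ ‖w ^ (n + 1)‖ - ‖c‖ := by linarith
    _ ≤ ‖w ^ (n + 1) + c‖ := by linarith [norm_le_add_norm_add (w ^ (n + 1)) c]

theorem pow_mul_norm_le_norm_iterate {z : 𝕜} (hc : ‖c‖ ≤ ‖z‖) (hz : 2 ≤ ‖z‖ ^ n) (k : ℕ) :
    (‖z‖ ^ n - 1) ^ k * ‖z‖ ≤ ‖(fun w : 𝕜 => w ^ (n + 1) + c)^[k] z‖ := by
  induction k with
  | zero => simp
  | succ k ih =>
    set w := (fun w : 𝕜 => w ^ (n + 1) + c)^[k] z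
    have hzw : ‖z‖ ≤ ‖w‖ :=
      le_trans (le_mul_of_one_le_left (norm_nonneg z) (one_le_pow₀ (by linarith))) ih
    calc (‖z‖ ^ n - 1) ^ (k + 1) * ‖z‖ = (‖z‖ ^ n - 1) * ((‖z‖ ^ n - 1) ^ k * ‖z‖) := by ring
      _ ≤ (‖z‖ ^ n - 1) * ‖w‖ := mul_le_mul_of_nonneg_left ih (by linarith)
      _ ≤ (‖w‖ ^ n - 1) * ‖w‖ := by gcongr
      _ ≤ ‖w ^ (n + 1) + c‖ := mul_norm_le_norm_pow_succ_add (hc.trans hzw)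
      _ = ‖(fun w : 𝕜 => w ^ (n + 1) + c)^[k + 1] z‖ := by rw [Function.iterate_succ_apply']

theorem exists_lt_norm_iterate {z : 𝕜} (hc : ‖c‖ ≤ ‖z‖) (hz : 2 < ‖z‖ ^ n) (M : ℝ) :
    ∃ k, M < ‖(fun w : 𝕜 => w ^ (n + 1) + c)^[k] z‖ := by
  have hz0 : 0 < ‖z‖ :=
    one_pos.trans (lt_of_pow_lt_pow_left₀ n (norm_nonneg z) (by rw [one_pow]; linarith))
  obtain ⟨k, hk⟩ := pow_unbounded_of_one_lt (M / ‖z‖) (by linarith : 1 < ‖z‖ ^ n - 1)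
  exact ⟨k, ((div_lt_iff₀ hz0).1 hk).trans_le (pow_mul_norm_le_norm_iterate hc hz.le k)⟩

theorem exists_lt_norm_iterate_zero {m : ℕ} (hm : 1 ≤ m)
    (h : 2 < ‖(fun w : 𝕜 => w ^ (n + 1) + c)^[m] 0‖ ^ n) (M : ℝ) :
    ∃ k, 1 ≤ k ∧ M < ‖(fun w : 𝕜 => w ^ (n + 1) + c)^[k] 0‖ := by
  set f := fun w : 𝕜 => w ^ (n + 1) + c
  obtain ⟨j, hj, hcj, hj2⟩ : ∃ j, 1 ≤ j ∧ ‖c‖ ≤ ‖f^[j] 0‖ ∧ 2 < ‖f^[j] 0‖ ^ n := by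
    have hf1 : f^[1] 0 = c := by simp [f]
    rcases le_total ‖c‖ ‖f^[m] 0‖ with hc | hc
    · exact ⟨m, hm, hc, h⟩
    · exact ⟨1, le_rfl, by rw [hf1], by
        rw [hf1]; exact h.trans_le (pow_le_pow_left₀ (norm_nonneg _) hc n)⟩
  obtain ⟨k, hk⟩ := exists_lt_norm_iterate hcj hj2 M
  exact ⟨k + j, by omega, by rwa [Function.iterate_add_apply]⟩

end Multibrot

theorem mem_multibrot_iff_abs_le (p : ℕ) (hp : 2 ≤ p) (c : ℂ) :
    (∃ M : ℝ, ∀ m : ℕ, 1 ≤ m → ‖(fun z : ℂ => z ^ p + c)^[m] 0‖ ≤ M) ↔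
      ∀ m : ℕ, 1 ≤ m →
        ‖(fun z : ℂ => z ^ p + c)^[m] 0‖ ≤ (2 : ℝ) ^ ((1 : ℝ) / ((p : ℝ) - 1)) := by
  obtain ⟨n, rfl⟩ : ∃ n, p = n + 1 := ⟨p - 1, by omega⟩
  have hn : n ≠ 0 := by omega
  have hR : ((2 : ℝ) ^ ((1 : ℝ) / (((n + 1 : ℕ) : ℝ) - 1))) ^ n = 2 := by
    rw [← Real.rpow_natCast, ← Real.rpow_mul zero_le_two]
    push_cast
    rw [add_sub_cancel_right, one_div_mul_cancel (by exact_mod_cast hn), Real.rpow_one]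
  refine ⟨fun ⟨M, hM⟩ m hm => ?_, fun h => ⟨_, h⟩⟩
  by_contra! hlt
  have h2 : 2 < ‖(fun z : ℂ => z ^ (n + 1) + c)^[m] 0‖ ^ n :=
    hR ▸ pow_lt_pow_left₀ hlt (by positivity) hn
  obtain ⟨k, hk, hMk⟩ := Multibrot.exists_lt_norm_iterate_zero hm h2 M
  exact (hM k hk).not_gt hMk
end

section
/- Let b, c, d ∈ ℝ, let P(x) = x³ + bx² + cx + d, and set D = 4c³ + 27d² + 4db³ − b²c² − 18bcd. Then: (i) if D > 0, P has exactly one real root and its two other complex roots are nonreal; (ii) if D = 0, all the roots of P are real and P has a root of multiplicity at least 2; (iii) if D < 0, P has three distinct real roots. -/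
lemma cubic_real_root (b c d : ℝ) : ∃ r : ℝ, r ^ 3 + b * r ^ 2 + c * r + d = 0 := by
  set M : ℝ := 1 + |b| + |c| + |d| with hM
  have hb := abs_nonneg b
  have hc0 := abs_nonneg c
  have hd0 := abs_nonneg d
  have hbb := le_abs_self b; have hbb' := neg_abs_le b
  have hcc := le_abs_self c; have hcc' := neg_abs_le c
  have hdd := le_abs_self d; have hdd' := neg_abs_le d
  have hfm : (-M) ^ 3 + b * (-M) ^ 2 + c * (-M) + d ≤ 0 := by
    nlinarith [sq_nonneg M, mul_le_mul_of_nonneg_right hbb (sq_nonneg M),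
      mul_le_mul_of_nonneg_left (by linarith : 1 ≤ M) (abs_nonneg c),
      mul_le_mul_of_nonneg_left (by nlinarith : 1 ≤ M ^ 2) (abs_nonneg d)]
  have hfM : 0 ≤ M ^ 3 + b * M ^ 2 + c * M + d := by
    nlinarith [sq_nonneg M, mul_le_mul_of_nonneg_right hbb' (sq_nonneg M),
      mul_le_mul_of_nonneg_left (by linarith : 1 ≤ M) (abs_nonneg c),
      mul_le_mul_of_nonneg_left (by nlinarith : 1 ≤ M ^ 2) (abs_nonneg d)]
  have hcont : ContinuousOn (fun x : ℝ => x ^ 3 + b * x ^ 2 + c * x + d) (Set.Icc (-M) M) := by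
    fun_prop
  have h := intermediate_value_Icc (by linarith : -M ≤ M) hcont
  obtain ⟨r, _, hr⟩ := h ⟨hfm, hfM⟩
  exact ⟨r, hr⟩

theorem cubic_discriminant_roots (b c d : ℝ)
    (D : ℝ) (hD : D = 4 * c ^ 3 + 27 * d ^ 2 + 4 * d * b ^ 3 - b ^ 2 * c ^ 2
      - 18 * b * c * d) :
    (0 < D →
      (∃! x : ℝ, x ^ 3 + b * x ^ 2 + c * x + d = 0) ∧
      (∃ z : ℂ, z.im ≠ 0 ∧ z ^ 3 + (b : ℂ) * z ^ 2 + (c : ℂ) * z + (d : ℂ) = 0)) ∧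
    (D = 0 →
      (∀ z : ℂ, z ^ 3 + (b : ℂ) * z ^ 2 + (c : ℂ) * z + (d : ℂ) = 0 → z.im = 0) ∧
      (∃ x : ℝ, x ^ 3 + b * x ^ 2 + c * x + d = 0 ∧ 3 * x ^ 2 + 2 * b * x + c = 0)) ∧
    (D < 0 →
      ∃ x₁ x₂ x₃ : ℝ, x₁ ≠ x₂ ∧ x₁ ≠ x₃ ∧ x₂ ≠ x₃ ∧
        x₁ ^ 3 + b * x₁ ^ 2 + c * x₁ + d = 0 ∧
        x₂ ^ 3 + b * x₂ ^ 2 + c * x₂ + d = 0 ∧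
        x₃ ^ 3 + b * x₃ ^ 2 + c * x₃ + d = 0) := by
  obtain ⟨r, hr⟩ := cubic_real_root b c d
  have hd : d = -(r ^ 3 + b * r ^ 2 + c * r) := by linarith
  subst hD hd
  refine ⟨?_, ?_, ?_⟩
  · -- case 0 < D
    intro hpos
    have hΔ : (b + r) ^ 2 - 4 * (c + b * r + r ^ 2) < 0 := by
      nlinarith [sq_nonneg (3 * r ^ 2 + 2 * b * r + c)]
    constructor
    · refine ⟨r, by ring, ?_⟩
      intro y hy
      by_contra hne
      have hq : y ^ 2 + (b + r) * y + (c + b * r + r ^ 2) = 0 := by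
        have h2 : (y - r) * (y ^ 2 + (b + r) * y + (c + b * r + r ^ 2)) = 0 := by
          linear_combination hy
        rcases mul_eq_zero.mp h2 with h | h
        · exact absurd (by linarith) hne
        · exact h
      nlinarith [sq_nonneg (2 * y + (b + r))]
    · set t := Real.sqrt (4 * (c + b * r + r ^ 2) - (b + r) ^ 2) with htdef
      have ht2 : t ^ 2 = 4 * (c + b * r + r ^ 2) - (b + r) ^ 2 :=
        Real.sq_sqrt (by linarith)
      have htpos : 0 < t := Real.sqrt_pos.mpr (by linarith)
      refine ⟨((-(b + r) / 2 : ℝ) : ℂ) + ((t / 2 : ℝ) : ℂ) * Complex.I, ?_, ?_⟩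
      · simp [Complex.add_im, Complex.mul_im]
        intro h
        linarith
      · have htc : (t : ℂ) ^ 2 = 4 * ((c : ℂ) + (b : ℂ) * r + (r : ℂ) ^ 2) - ((b : ℂ) + r) ^ 2 := by
          exact_mod_cast ht2
        have hquad : (((-(b + r) / 2 : ℝ) : ℂ) + ((t / 2 : ℝ) : ℂ) * Complex.I) ^ 2
            + ((b : ℂ) + r) * (((-(b + r) / 2 : ℝ) : ℂ) + ((t / 2 : ℝ) : ℂ) * Complex.I)
            + ((c : ℂ) + (b : ℂ) * r + (r : ℂ) ^ 2) = 0 := by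
          push_cast
          linear_combination ((t : ℂ) ^ 2 / 4) * Complex.I_sq - (1 / 4) * htc
        push_cast
        push_cast at hquad
        linear_combination
          ((-(↑b + ↑r) / 2 + (t : ℂ) / 2 * Complex.I) - (r : ℂ)) * hquad
  · -- case D = 0
    intro h0
    have he2 : ((b + r) ^ 2 - 4 * (c + b * r + r ^ 2)) * (3 * r ^ 2 + 2 * b * r + c) ^ 2 = 0 := by
      linear_combination -h0
    have hcases : (3 * r ^ 2 + 2 * b * r + c) = 0 ∨
        (b + r) ^ 2 - 4 * (c + b * r + r ^ 2) = 0 := by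
      rcases mul_eq_zero.mp he2 with h | h
      · exact Or.inr h
      · exact Or.inl (pow_eq_zero_iff (by norm_num) |>.mp h)
    constructor
    · have hΔnn : 0 ≤ (b + r) ^ 2 - 4 * (c + b * r + r ^ 2) := by
        rcases hcases with h | h
        · have h2 : (b + r) ^ 2 - 4 * (c + b * r + r ^ 2) = (b + 3 * r) ^ 2 := by
            linear_combination (-4) * h
          rw [h2]; positivity
        · linarith
      set s := Real.sqrt ((b + r) ^ 2 - 4 * (c + b * r + r ^ 2)) with hsdef
      have hs2 : s ^ 2 = (b + r) ^ 2 - 4 * (c + b * r + r ^ 2) := Real.sq_sqrt hΔnn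
      intro z hz
      have hfz : (z - (r : ℂ)) * (z ^ 2 + ((b : ℂ) + r) * z + ((c : ℂ) + (b : ℂ) * r + (r : ℂ) ^ 2)) = 0 := by
        push_cast at hz
        linear_combination hz
      rcases mul_eq_zero.mp hfz with h | h
      · rw [sub_eq_zero.mp h]
        exact Complex.ofReal_im r
      · have hs2c : (s : ℂ) ^ 2 = ((b : ℂ) + r) ^ 2 - 4 * ((c : ℂ) + (b : ℂ) * r + (r : ℂ) ^ 2) := by
          exact_mod_cast hs2
        have h4 : (2 * z + ((b : ℂ) + r) - s) * (2 * z + ((b : ℂ) + r) + s) = 0 := by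
          linear_combination 4 * h - hs2c
        rcases mul_eq_zero.mp h4 with h5 | h5
        · have hz2 : z = (((s - (b + r)) / 2 : ℝ) : ℂ) := by
            push_cast
            linear_combination h5 / 2
          rw [hz2]; exact Complex.ofReal_im _
        · have hz2 : z = (((-(b + r) - s) / 2 : ℝ) : ℂ) := by
            push_cast
            linear_combination h5 / 2
          rw [hz2]; exact Complex.ofReal_im _
    · rcases hcases with h | h
      · exact ⟨r, by ring, h⟩
      · refine ⟨-(b + r) / 2, ?_, ?_⟩
        · linear_combination ((-(b + r) / 2 - r) * (-1 / 4)) * h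
        · linear_combination (-1 / 4) * h
  · -- case D < 0
    intro hneg
    have hΔpos : 0 < (b + r) ^ 2 - 4 * (c + b * r + r ^ 2) := by
      nlinarith [sq_nonneg (3 * r ^ 2 + 2 * b * r + c)]
    have hepos : (3 * r ^ 2 + 2 * b * r + c) ≠ 0 := by
      intro h
      have h2 : 4 * c ^ 3 + 27 * (-(r ^ 3 + b * r ^ 2 + c * r)) ^ 2 +
          4 * (-(r ^ 3 + b * r ^ 2 + c * r)) * b ^ 3 - b ^ 2 * c ^ 2 -
          18 * b * c * (-(r ^ 3 + b * r ^ 2 + c * r)) = 0 := by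
        linear_combination (-((b + r) ^ 2 - 4 * (c + b * r + r ^ 2)) * (3 * r ^ 2 + 2 * b * r + c)) * h
      linarith
    set s := Real.sqrt ((b + r) ^ 2 - 4 * (c + b * r + r ^ 2)) with hsdef
    have hs2 : s ^ 2 = (b + r) ^ 2 - 4 * (c + b * r + r ^ 2) := Real.sq_sqrt hΔpos.le
    have hspos : 0 < s := Real.sqrt_pos.mpr hΔpos
    refine ⟨r, (-(b + r) + s) / 2, (-(b + r) - s) / 2, ?_, ?_, ?_, by ring, ?_, ?_⟩
    · intro hrx
      apply hepos
      have h2 : 2 * r + (b + r) = s := by linarith [hrx]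
      linear_combination (1 / 4) * hs2 + ((2 * r + (b + r) + s) / 4) * h2
    · intro hrx
      apply hepos
      have h2 : 2 * r + (b + r) = -s := by linarith [hrx]
      linear_combination (1 / 4) * hs2 + ((2 * r + (b + r) - s) / 4) * h2
    · intro h
      have : s = 0 := by linarith [h]
      linarith
    · linear_combination (((-(b + r) + s) / 2 - r) / 4) * hs2
    · linear_combination (((-(b + r) - s) / 2 - r) / 4) * hs2
end

section
/- If c = x + y·i with x, y ∈ ℝ belongs to the Mandelbric M³, then c' = −x + y·i also belongs to M³. -/
/-! The isometry `z ↦ -conj z` fixes `0` and, because `3` is odd, conjugates `z ↦ z³ + c` to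
`z ↦ z³ - conj c`; hence it maps the critical orbit of the one map onto that of the other, and
`-conj (x + y i) = -x + y i`. -/

open ComplexConjugate

theorem Complex.semiconj_neg_conj_cube_add (c : ℂ) :
    Function.Semiconj (fun z : ℂ => -conj z) (fun z => z ^ 3 + c) (fun z => z ^ 3 + -conj c) :=
  fun z => by simp only [map_add, map_pow]; ring

theorem Complex.iterate_cube_add_neg_conj_zero (c : ℂ) (m : ℕ) :
    (fun z : ℂ => z ^ 3 + -conj c)^[m] 0 = -conj ((fun z : ℂ => z ^ 3 + c)^[m] 0) := by
  simpa using ((Complex.semiconj_neg_conj_cube_add c).iterate_right m 0).symm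

theorem mandelbric_reflect_mem (x y : ℝ)
    (hc : ∃ M : ℝ, ∀ m : ℕ, 1 ≤ m →
      ‖(fun z : ℂ => z ^ 3 + ((x : ℂ) + (y : ℂ) * Complex.I))^[m] 0‖ ≤ M) :
    ∃ M : ℝ, ∀ m : ℕ, 1 ≤ m →
      ‖(fun z : ℂ => z ^ 3 + ((-x : ℂ) + (y : ℂ) * Complex.I))^[m] 0‖ ≤ M := by
  obtain ⟨M, hM⟩ := hc
  have hreflect : (-x : ℂ) + y * Complex.I = -conj ((x : ℂ) + y * Complex.I) := by
    simp only [map_add, map_mul, Complex.conj_ofReal, Complex.conj_I]; ring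
  refine ⟨M, fun m hm => ?_⟩
  rw [hreflect, Complex.iterate_cube_add_neg_conj_zero, norm_neg, Complex.norm_conj]
  exact hM m hm
end

section
/- The intersection of the Mandelbric M³ with the real axis is exactly the interval [−2/(3√3), 2/(3√3)]; that is, for a real number c, c ∈ M³ if and only if −2/(3√3) ≤ c ≤ 2/(3√3). -/
/-!
For real `c` the orbit of `0` under `z ↦ z³ + c` is real, and `c ↦ -c` only flips its sign,
so everything reduces to `c ≥ 0` on the real line. On `[0, ∞)` the function `x ↦ x - x³`
attains its maximum `ρ - ρ³ = 2/(3√3)` at `ρ = √3/3`. If `|c| ≤ ρ - ρ³`, the interval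
`[-ρ, ρ]` is mapped into itself. If `c > ρ - ρ³`, every step raises the orbit by at least
`c - (ρ - ρ³)`, so the orbit tends to infinity.
-/

open Filter Function

lemma ofReal_iterate_cube_add (c : ℝ) (m : ℕ) :
    (((fun x : ℝ => x ^ 3 + c)^[m] 0 : ℝ) : ℂ) = (fun z : ℂ => z ^ 3 + (c : ℂ))^[m] 0 := by
  have h : Semiconj ((↑) : ℝ → ℂ) (fun x => x ^ 3 + c) (fun z => z ^ 3 + c) := fun x => by
    push_cast; rfl
  simpa using (h.iterate_right m).eq 0

lemma iterate_cube_add_neg (c : ℝ) (m : ℕ) :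
    (fun x : ℝ => x ^ 3 + -c)^[m] 0 = -(fun x : ℝ => x ^ 3 + c)^[m] 0 := by
  have h : Semiconj Neg.neg (fun x : ℝ => x ^ 3 + c) (fun x => x ^ 3 + -c) := fun x => by ring
  simpa using ((h.iterate_right m).eq 0).symm

lemma abs_iterate_cube_add_abs (c : ℝ) (m : ℕ) :
    |(fun x : ℝ => x ^ 3 + |c|)^[m] 0| = |(fun x : ℝ => x ^ 3 + c)^[m] 0| := by
  rcases abs_choice c with h | h <;> rw [h]
  rw [iterate_cube_add_neg, abs_neg]

lemma abs_iterate_cube_add_le {c ρ : ℝ} (hρ : 0 ≤ ρ) (hc : |c| ≤ ρ - ρ ^ 3) (m : ℕ) :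
    |(fun x : ℝ => x ^ 3 + c)^[m] 0| ≤ ρ := by
  induction m with
  | zero => simpa using hρ
  | succ m ih =>
    rw [iterate_succ_apply']
    calc |((fun x : ℝ => x ^ 3 + c)^[m] 0) ^ 3 + c|
        ≤ |(fun x : ℝ => x ^ 3 + c)^[m] 0| ^ 3 + |c| := by
          rw [← abs_pow]; exact abs_add_le _ _
      _ ≤ ρ ^ 3 + (ρ - ρ ^ 3) := by gcongr
      _ = ρ := by ring

lemma nat_mul_le_iterate_cube_add {a c : ℝ} (ha : ∀ x, 0 ≤ x → x - x ^ 3 ≤ a) (hac : a ≤ c)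
    (n : ℕ) : n * (c - a) ≤ (fun x : ℝ => x ^ 3 + c)^[n] 0 := by
  induction n with
  | zero => simp
  | succ n ih =>
    have hx : 0 ≤ (fun x : ℝ => x ^ 3 + c)^[n] 0 :=
      (mul_nonneg n.cast_nonneg (sub_nonneg.2 hac)).trans ih
    rw [iterate_succ_apply']
    push_cast
    linarith [ha _ hx]

lemma sub_cube_le_sqrt_three_div_three {x : ℝ} (hx : 0 ≤ x) :
    x - x ^ 3 ≤ √3 / 3 - (√3 / 3) ^ 3 := by
  have h3 : √3 ^ 2 = 3 := Real.sq_sqrt (by norm_num)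
  have hfactor : (√3 / 3 - (√3 / 3) ^ 3) - (x - x ^ 3) =
      (x - √3 / 3) ^ 2 * (x + 2 * (√3 / 3)) := by
    linear_combination (x / 3 - √3 / 9) * h3
  rw [← sub_nonneg, hfactor]
  positivity

lemma sqrt_three_div_three_sub_cube : √3 / 3 - (√3 / 3) ^ 3 = 2 / (3 * √3) := by
  have h3 : √3 ^ 2 = 3 := Real.sq_sqrt (by norm_num)
  field_simp
  linear_combination (6 - √3 ^ 2) * h3

lemma tendsto_abs_iterate_cube_add_atTop {c : ℝ} (hc : 2 / (3 * √3) < |c|) :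
    Tendsto (fun n => |(fun x : ℝ => x ^ 3 + c)^[n] 0|) atTop atTop := by
  rw [← sqrt_three_div_three_sub_cube] at hc
  have hlow (n : ℕ) :
      n * (|c| - (√3 / 3 - (√3 / 3) ^ 3)) ≤ |(fun x : ℝ => x ^ 3 + c)^[n] 0| := by
    rw [← abs_iterate_cube_add_abs]
    exact (nat_mul_le_iterate_cube_add (fun _ => sub_cube_le_sqrt_three_div_three) hc.le n).trans
      (le_abs_self _)
  exact tendsto_atTop_mono hlow
    (tendsto_natCast_atTop_atTop.atTop_mul_const (sub_pos.2 hc))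

theorem mandelbric_inter_real (c : ℝ) :
    (∃ M : ℝ, ∀ m : ℕ, 1 ≤ m →
        ‖(fun z : ℂ => z ^ 3 + (c : ℂ))^[m] 0‖ ≤ M) ↔
      -2 / (3 * Real.sqrt 3) ≤ c ∧ c ≤ 2 / (3 * Real.sqrt 3) := by
  simp_rw [← ofReal_iterate_cube_add, Complex.norm_real, Real.norm_eq_abs]
  rw [neg_div, ← abs_le]
  constructor
  · rintro ⟨M, hM⟩
    by_contra! hc
    obtain ⟨m, hm, hMm⟩ := ((eventually_ge_atTop 1).and
      ((tendsto_abs_iterate_cube_add_atTop hc).eventually_gt_atTop M)).exists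
    exact (hM m hm).not_gt hMm
  · intro hc
    rw [← sqrt_three_div_three_sub_cube] at hc
    exact ⟨√3 / 3, fun m _ => abs_iterate_cube_add_le (by positivity) hc m⟩
end

section
/- Let p ≥ 2 be an integer, let c = (a,b) ∈ ℝ², and let T : ℝ² → ℝ² be the linear map T(x,y) = (x−y, x+y). Then for every natural number m ≥ 1 and every (x,y) ∈ ℝ², T(H_{p,c}^m((x,y))) = (Q_{p,a−b}^m(x−y), Q_{p,a+b}^m(x+y)), where Q_{p,e}(t) = t^p + e on ℝ. -/
/-- Hyperbolic (duplex) multiplication on ℝ². -/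
def hMul (u v : ℝ × ℝ) : ℝ × ℝ := (u.1 * v.1 + u.2 * v.2, u.2 * v.1 + u.1 * v.2)

/-- p-fold ⋄-power of a hyperbolic number. -/
def hPow (w : ℝ × ℝ) : ℕ → ℝ × ℝ
  | 0 => (1, 0)
  | n + 1 => hMul (hPow w n) w

/-- The hyperbolic polynomial H_{p,c}(w) = w^{⋄p} + c. -/
def hQ (p : ℕ) (c : ℝ × ℝ) (w : ℝ × ℝ) : ℝ × ℝ := hPow w p + c

lemma hPow_sub (w : ℝ × ℝ) (n : ℕ) : (hPow w n).1 - (hPow w n).2 = (w.1 - w.2) ^ n := by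
  induction n with
  | zero => simp [hPow]
  | succ k ih => simp only [hPow, hMul, pow_succ, ← ih]; ring

lemma hPow_add (w : ℝ × ℝ) (n : ℕ) : (hPow w n).1 + (hPow w n).2 = (w.1 + w.2) ^ n := by
  induction n with
  | zero => simp [hPow]
  | succ k ih => simp only [hPow, hMul, pow_succ, ← ih]; ring

theorem hyperbolic_iterate_decomposition (p : ℕ) (hp : 2 ≤ p) (a b : ℝ) :
    ∀ m : ℕ, 1 ≤ m → ∀ x y : ℝ,
      (fun q : ℝ × ℝ => (q.1 - q.2, q.1 + q.2)) ((hQ p (a, b))^[m] (x, y)) =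
        ((fun t : ℝ => t ^ p + (a - b))^[m] (x - y),
         (fun t : ℝ => t ^ p + (a + b))^[m] (x + y)) := by
  have key : ∀ m : ℕ, ∀ x y : ℝ,
      (fun q : ℝ × ℝ => (q.1 - q.2, q.1 + q.2)) ((hQ p (a, b))^[m] (x, y)) =
        ((fun t : ℝ => t ^ p + (a - b))^[m] (x - y),
         (fun t : ℝ => t ^ p + (a + b))^[m] (x + y)) := by
    intro m
    induction m with
    | zero => intro x y; simp
    | succ k ih =>
      intro x y
      have h1 : (hQ p (a, b) (x, y)).1 - (hQ p (a, b) (x, y)).2 = (x - y) ^ p + (a - b) := by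
        have := hPow_sub (x, y) p
        simp only [hQ, Prod.fst_add, Prod.snd_add] at *
        linarith
      have h2 : (hQ p (a, b) (x, y)).1 + (hQ p (a, b) (x, y)).2 = (x + y) ^ p + (a + b) := by
        have := hPow_add (x, y) p
        simp only [hQ, Prod.fst_add, Prod.snd_add] at *
        linarith
      rw [Function.iterate_succ_apply, Function.iterate_succ_apply,
        Function.iterate_succ_apply,
        show hQ p (a, b) (x, y) = ((hQ p (a, b) (x, y)).1, (hQ p (a, b) (x, y)).2) from rfl,
        ih]
      simp only [h1, h2]
  exact fun m _ => key m
end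

section
/- Let c₁, c₄, c₆ ∈ ℝ and let c = ((c₁, c₄·i), (c₆·i, 0)) ∈ 𝕄(3) (i.e. c = c₁·1 + c₄·j₁ + c₆·j₂, where j₁ = ((0,i),(0,0)) and j₂ = ((0,0),(i,0))). Then the sequence (Q_{3,c}^m(0))_{m≥1} is bounded in ‖·‖₃ if and only if both hyperbolic numbers (c₁, c₄ − c₆) and (c₁, c₄ + c₆) belong to the Hyperbric H³. (This expresses the Perplexbric P³ as the union over y of the sets [(H³ − y·j₁) ∩ (H³ + y·j₁)] + y·j₂.) -/
/-- Bicomplex multiplication on ℂ × ℂ. -/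
def bcMul (z w : ℂ × ℂ) : ℂ × ℂ := (z.1 * w.1 - z.2 * w.2, z.1 * w.2 + z.2 * w.1)

/-- The bicomplex norm ‖(z₁,z₂)‖₂ = √(|z₁|² + |z₂|²). -/
noncomputable def bcNorm (z : ℂ × ℂ) : ℝ :=
  Real.sqrt (‖z.1‖ ^ 2 + ‖z.2‖ ^ 2)

/-- Tricomplex multiplication on 𝕄(2) × 𝕄(2). -/
def tcMul (z w : (ℂ × ℂ) × (ℂ × ℂ)) : (ℂ × ℂ) × (ℂ × ℂ) :=
  (bcMul z.1 w.1 - bcMul z.2 w.2, bcMul z.1 w.2 + bcMul z.2 w.1)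

/-- The tricomplex norm ‖(ζ₁,ζ₂)‖₃ = √(‖ζ₁‖₂² + ‖ζ₂‖₂²). -/
noncomputable def tcNorm (z : (ℂ × ℂ) × (ℂ × ℂ)) : ℝ :=
  Real.sqrt (bcNorm z.1 ^ 2 + bcNorm z.2 ^ 2)

/-- The tricomplex cubic polynomial Q_{3,c}(η) = η³ + c. -/
def tcQ3 (c : (ℂ × ℂ) × (ℂ × ℂ)) (z : (ℂ × ℂ) × (ℂ × ℂ)) :
    (ℂ × ℂ) × (ℂ × ℂ) := tcMul (tcMul z z) z + c

/-- The hyperbolic cubic polynomial H_{3,c}(w) = w⋄w⋄w + c. -/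
def hQ3 (c : ℝ × ℝ) (w : ℝ × ℝ) : ℝ × ℝ := hMul (hMul w w) w + c

/-- The Hyperbric H³. -/
def Hyperbric : Set (ℝ × ℝ) :=
  {c | ∃ M : ℝ, ∀ m : ℕ, 1 ≤ m → ‖(hQ3 c)^[m] (0, 0)‖ ≤ M}

/-!
On the real subalgebra spanned by `1, j₁, j₂, j₁j₂` the tricomplex numbers split along two
idempotents into two copies of the hyperbolic numbers. Since `c` lies in this subalgebra, the orbit
of `0` under `Q_{3,c}` is the image of the pair of orbits of `0` under `H_{3,(c₁, c₄ - c₆)}` and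
`H_{3,(c₁, c₄ + c₆)}`; the splitting map is bi-Lipschitz (with constant `√2`), so the tricomplex
orbit is bounded iff both hyperbolic orbits are.
-/

/-- The idempotent representation `(u, v) ↦ (u₁ + u₂ j₁) γ + (v₁ + v₂ j₁) γ̄` of a pair of
hyperbolic numbers, where `γ = (1 + j)/2`, `γ̄ = (1 - j)/2` and `j = ((0,0),(0,1))`, `j² = 1`. -/
noncomputable def ofHyperbolicPair (p : (ℝ × ℝ) × (ℝ × ℝ)) : (ℂ × ℂ) × (ℂ × ℂ) :=
  ((((p.1.1 + p.2.1) / 2 : ℝ), ((p.1.2 + p.2.2) / 2 : ℝ) * Complex.I),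
   (((p.2.2 - p.1.2) / 2 : ℝ) * Complex.I, ((p.1.1 - p.2.1) / 2 : ℝ)))

lemma ofHyperbolicPair_add (p q : (ℝ × ℝ) × (ℝ × ℝ)) :
    ofHyperbolicPair (p + q) = ofHyperbolicPair p + ofHyperbolicPair q := by
  simp only [ofHyperbolicPair, Prod.fst_add, Prod.snd_add, Prod.mk_add_mk, Prod.mk.injEq]
  refine ⟨⟨?_, ?_⟩, ?_, ?_⟩ <;> · push_cast; ring

lemma tcMul_ofHyperbolicPair (p q : (ℝ × ℝ) × (ℝ × ℝ)) :
    tcMul (ofHyperbolicPair p) (ofHyperbolicPair q) =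
      ofHyperbolicPair (hMul p.1 q.1, hMul p.2 q.2) := by
  simp only [tcMul, bcMul, ofHyperbolicPair, hMul, Prod.mk_sub_mk, Prod.mk_add_mk,
    Prod.mk.injEq]
  refine ⟨⟨?_, ?_⟩, ?_, ?_⟩ <;> · push_cast; grind [Complex.I_sq]

lemma semiconj_ofHyperbolicPair (a : (ℝ × ℝ) × (ℝ × ℝ)) :
    Function.Semiconj ofHyperbolicPair (Prod.map (hQ3 a.1) (hQ3 a.2))
      (tcQ3 (ofHyperbolicPair a)) := fun p => by
  rw [tcQ3, tcMul_ofHyperbolicPair, tcMul_ofHyperbolicPair, ← ofHyperbolicPair_add]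
  rfl

lemma tcNorm_ofHyperbolicPair (p : (ℝ × ℝ) × (ℝ × ℝ)) :
    tcNorm (ofHyperbolicPair p) = √((p.1.1 ^ 2 + p.1.2 ^ 2 + p.2.1 ^ 2 + p.2.2 ^ 2) / 2) := by
  simp only [tcNorm, bcNorm, ofHyperbolicPair, norm_mul, Complex.norm_real, Real.norm_eq_abs,
    Complex.norm_I, mul_one, sq_abs]
  rw [Real.sq_sqrt (by positivity), Real.sq_sqrt (by positivity)]
  ring_nf

lemma norm_le_sqrt_two_mul_tcNorm (p : (ℝ × ℝ) × (ℝ × ℝ)) :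
    ‖p‖ ≤ √2 * tcNorm (ofHyperbolicPair p) := by
  rw [tcNorm_ofHyperbolicPair, ← Real.sqrt_mul zero_le_two, mul_div_cancel₀ _ two_ne_zero]
  simp only [Prod.norm_def, Real.norm_eq_abs, max_le_iff]
  refine ⟨⟨?_, ?_⟩, ?_, ?_⟩ <;> refine Real.abs_le_sqrt ?_ <;>
    linarith [sq_nonneg p.1.1, sq_nonneg p.1.2, sq_nonneg p.2.1, sq_nonneg p.2.2]

lemma tcNorm_le_sqrt_two_mul_norm (p : (ℝ × ℝ) × (ℝ × ℝ)) :
    tcNorm (ofHyperbolicPair p) ≤ √2 * ‖p‖ := by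
  have h (x : ℝ) (hx : |x| ≤ ‖p‖) : x ^ 2 ≤ ‖p‖ ^ 2 := sq_le_sq' (abs_le.1 hx).1 (abs_le.1 hx).2
  have h11 := h p.1.1 ((le_max_left _ _).trans (le_max_left _ _))
  have h12 := h p.1.2 ((le_max_right _ _).trans (le_max_left _ _))
  have h21 := h p.2.1 ((le_max_left _ _).trans (le_max_right _ _))
  have h22 := h p.2.2 ((le_max_right _ _).trans (le_max_right _ _))
  rw [tcNorm_ofHyperbolicPair, ← Real.sqrt_sq (norm_nonneg p), ← Real.sqrt_mul zero_le_two]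
  exact Real.sqrt_le_sqrt (by linarith)

lemma exists_bound_iff_of_le_mul {f g : ℕ → ℝ} {C : ℝ} (hC : 0 ≤ C)
    (hfg : ∀ m, f m ≤ C * g m) (hgf : ∀ m, g m ≤ C * f m) :
    (∃ M, ∀ m, 1 ≤ m → f m ≤ M) ↔ ∃ M, ∀ m, 1 ≤ m → g m ≤ M := by
  have key {f g : ℕ → ℝ} (hfg : ∀ m, f m ≤ C * g m) :
      (∃ M, ∀ m, 1 ≤ m → g m ≤ M) → ∃ M, ∀ m, 1 ≤ m → f m ≤ M :=
    fun ⟨M, hM⟩ => ⟨C * M, fun m hm => (hfg m).trans (mul_le_mul_of_nonneg_left (hM m hm) hC)⟩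
  exact ⟨key hgf, key hfg⟩

lemma exists_bound_norm_prod_iff {E F : Type*} [Norm E] [Norm F] (x : ℕ → E) (y : ℕ → F) :
    (∃ M, ∀ m, 1 ≤ m → ‖(x m, y m)‖ ≤ M) ↔
      (∃ M, ∀ m, 1 ≤ m → ‖x m‖ ≤ M) ∧ ∃ M, ∀ m, 1 ≤ m → ‖y m‖ ≤ M := by
  simp only [Prod.norm_mk, max_le_iff]
  refine ⟨fun ⟨M, hM⟩ => ⟨⟨M, fun m hm => (hM m hm).1⟩, M, fun m hm => (hM m hm).2⟩, ?_⟩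
  rintro ⟨⟨M₁, hM₁⟩, M₂, hM₂⟩
  exact ⟨max M₁ M₂, fun m hm =>
    ⟨(hM₁ m hm).trans (le_max_left _ _), (hM₂ m hm).trans (le_max_right _ _)⟩⟩

theorem perplexbric_characterization (c₁ c₄ c₆ : ℝ) :
    (∃ M : ℝ, ∀ m : ℕ, 1 ≤ m →
        tcNorm ((tcQ3 (((c₁ : ℂ), (c₄ : ℂ) * Complex.I),
          ((c₆ : ℂ) * Complex.I, 0)))^[m] ((0, 0), (0, 0))) ≤ M) ↔
      (c₁, c₄ - c₆) ∈ Hyperbric ∧ (c₁, c₄ + c₆) ∈ Hyperbric := by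
  set a : (ℝ × ℝ) × (ℝ × ℝ) := ((c₁, c₄ - c₆), (c₁, c₄ + c₆))
  have hc : (((c₁ : ℂ), (c₄ : ℂ) * Complex.I), ((c₆ : ℂ) * Complex.I, 0)) =
      ofHyperbolicPair a := by
    simp only [a, ofHyperbolicPair, Prod.mk.injEq]
    refine ⟨⟨?_, ?_⟩, ?_, ?_⟩ <;> · push_cast; ring
  have h0 : ((0, 0), (0, 0)) = ofHyperbolicPair 0 := by simp [ofHyperbolicPair]
  have orbit (m : ℕ) : (tcQ3 (ofHyperbolicPair a))^[m] (ofHyperbolicPair 0) =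
      ofHyperbolicPair ((hQ3 a.1)^[m] 0, (hQ3 a.2)^[m] 0) := by
    rw [← ((semiconj_ofHyperbolicPair a).iterate_right m).eq, Prod.map_iterate]
    rfl
  simp only [hc, h0, orbit]
  rw [exists_bound_iff_of_le_mul (Real.sqrt_nonneg 2) (fun m => tcNorm_le_sqrt_two_mul_norm _)
    (fun m => norm_le_sqrt_two_mul_tcNorm _)]
  exact exists_bound_norm_prod_iff _ _
end

section
/- The Perplexbric P³ is an octahedron: for c₁, c₄, c₆ ∈ ℝ and c = ((c₁, c₄·i), (c₆·i, 0)) ∈ 𝕄(3) (i.e. c = c₁·1 + c₄·j₁ + c₆·j₂, where j₁ = ((0,i),(0,0)) and j₂ = ((0,0),(i,0))), the sequence (Q_{3,c}^m(0))_{m≥1} is bounded in ‖·‖₃ if and only if |c₁| + |c₄| + |c₆| ≤ 2/(3√3). In particular, P³ is a regular octahedron with edge length 2√2/(3√3). -/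
open Complex

-- The ring homomorphisms 𝕄(3) → ℂ: in the paper's notation (ζ₁, ζ₂) = ζ₁ + ζ₂ i₃ and
-- (z₁, z₂) = z₁ + z₂ i₂, and `tcChar s t` sends i₂ ↦ -s i, i₃ ↦ -t i. The four choices of signs
-- give the idempotent decomposition 𝕄(3) ≅ ℂ⁴.
def tcChar (s t : ℝ) (z : (ℂ × ℂ) × (ℂ × ℂ)) : ℂ :=
  z.1.1 - s * I * z.1.2 - t * I * z.2.1 - s * t * z.2.2

section Characters

variable {s t : ℝ}

lemma tcChar_zero (s t : ℝ) : tcChar s t 0 = 0 := by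
  simp [tcChar]

lemma tcChar_add (s t : ℝ) (z w : (ℂ × ℂ) × (ℂ × ℂ)) :
    tcChar s t (z + w) = tcChar s t z + tcChar s t w := by
  simp only [tcChar, Prod.fst_add, Prod.snd_add]
  ring

lemma tcChar_tcMul (hs : s = 1 ∨ s = -1) (ht : t = 1 ∨ t = -1) (z w : (ℂ × ℂ) × (ℂ × ℂ)) :
    tcChar s t (tcMul z w) = tcChar s t z * tcChar s t w := by
  have hs' : (s : ℂ) ^ 2 = 1 := by rcases hs with rfl | rfl <;> norm_num
  have ht' : (t : ℂ) ^ 2 = 1 := by rcases ht with rfl | rfl <;> norm_num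
  simp only [tcChar, tcMul, bcMul, Prod.fst_add, Prod.snd_add, Prod.fst_sub, Prod.snd_sub]
  ring_nf
  simp only [I_sq, hs', ht']
  ring

lemma tcChar_tcQ3 (hs : s = 1 ∨ s = -1) (ht : t = 1 ∨ t = -1) (c z : (ℂ × ℂ) × (ℂ × ℂ)) :
    tcChar s t (tcQ3 c z) = tcChar s t z ^ 3 + tcChar s t c := by
  rw [tcQ3, tcChar_add, tcChar_tcMul hs ht, tcChar_tcMul hs ht, pow_three, mul_assoc]

lemma semiconj_tcChar_tcQ3 (hs : s = 1 ∨ s = -1) (ht : t = 1 ∨ t = -1) (c : (ℂ × ℂ) × (ℂ × ℂ)) :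
    Function.Semiconj (tcChar s t) (tcQ3 c) (fun x => x ^ 3 + tcChar s t c) :=
  tcChar_tcQ3 hs ht c

lemma tcNorm_sq (z : (ℂ × ℂ) × (ℂ × ℂ)) :
    tcNorm z ^ 2 = ‖z.1.1‖ ^ 2 + ‖z.1.2‖ ^ 2 + ‖z.2.1‖ ^ 2 + ‖z.2.2‖ ^ 2 := by
  rw [tcNorm, bcNorm, bcNorm, Real.sq_sqrt (by positivity), Real.sq_sqrt (by positivity),
    Real.sq_sqrt (by positivity)]
  ring

lemma tcNorm_nonneg (z : (ℂ × ℂ) × (ℂ × ℂ)) : 0 ≤ tcNorm z := Real.sqrt_nonneg _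

lemma sum_norm_tcChar_sq (z : (ℂ × ℂ) × (ℂ × ℂ)) :
    ‖tcChar 1 1 z‖ ^ 2 + ‖tcChar 1 (-1) z‖ ^ 2 + ‖tcChar (-1) 1 z‖ ^ 2 + ‖tcChar (-1) (-1) z‖ ^ 2
      = 4 * tcNorm z ^ 2 := by
  simp only [tcNorm_sq, Complex.sq_norm, normSq_apply, tcChar, sub_re, sub_im, mul_re, mul_im,
    I_re, I_im, ofReal_one, ofReal_neg, one_re, one_im, neg_re, neg_im]
  ring

lemma norm_tcChar_le (hs : s = 1 ∨ s = -1) (ht : t = 1 ∨ t = -1) (z : (ℂ × ℂ) × (ℂ × ℂ)) :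
    ‖tcChar s t z‖ ≤ 2 * tcNorm z := by
  have hsum := sum_norm_tcChar_sq z
  have hsq : ‖tcChar s t z‖ ^ 2 ≤ (2 * tcNorm z) ^ 2 := by
    rcases hs with rfl | rfl <;> rcases ht with rfl | rfl <;>
      linarith [sq_nonneg ‖tcChar 1 1 z‖, sq_nonneg ‖tcChar 1 (-1) z‖,
        sq_nonneg ‖tcChar (-1) 1 z‖, sq_nonneg ‖tcChar (-1) (-1) z‖]
  exact (sq_le_sq₀ (norm_nonneg _) (by linarith [tcNorm_nonneg z])).1 hsq

lemma tcNorm_le_of_norm_tcChar_le {K : ℝ} {z : (ℂ × ℂ) × (ℂ × ℂ)}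
    (h : ∀ s t : ℝ, (s = 1 ∨ s = -1) → (t = 1 ∨ t = -1) → ‖tcChar s t z‖ ≤ K) :
    tcNorm z ≤ K := by
  have hK : 0 ≤ K := (norm_nonneg _).trans (h 1 1 (.inl rfl) (.inl rfl))
  have hsq (s t : ℝ) (hs : s = 1 ∨ s = -1) (ht : t = 1 ∨ t = -1) : ‖tcChar s t z‖ ^ 2 ≤ K ^ 2 :=
    pow_le_pow_left₀ (norm_nonneg _) (h s t hs ht) 2
  refine (sq_le_sq₀ (tcNorm_nonneg z) hK).1 ?_
  linarith [sum_norm_tcChar_sq z, hsq 1 1 (.inl rfl) (.inl rfl), hsq 1 (-1) (.inl rfl) (.inr rfl),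
    hsq (-1) 1 (.inr rfl) (.inl rfl), hsq (-1) (-1) (.inr rfl) (.inr rfl)]

end Characters

lemma tcQ3_orbit_bounded_iff (c : (ℂ × ℂ) × (ℂ × ℂ)) :
    (∃ M : ℝ, ∀ m : ℕ, 1 ≤ m → tcNorm ((tcQ3 c)^[m] 0) ≤ M) ↔
      ∀ s t : ℝ, (s = 1 ∨ s = -1) → (t = 1 ∨ t = -1) →
        ∃ M : ℝ, ∀ m : ℕ, ‖(fun x => x ^ 3 + tcChar s t c)^[m] 0‖ ≤ M := by
  have horbit (s t : ℝ) (hs : s = 1 ∨ s = -1) (ht : t = 1 ∨ t = -1) (m : ℕ) :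
      (fun x => x ^ 3 + tcChar s t c)^[m] 0 = tcChar s t ((tcQ3 c)^[m] 0) := by
    rw [((semiconj_tcChar_tcQ3 hs ht c).iterate_right m).eq, tcChar_zero]
  constructor
  · rintro ⟨M, hM⟩ s t hs ht
    refine ⟨2 * M, fun m => ?_⟩
    rw [horbit s t hs ht]
    rcases m.eq_zero_or_pos with rfl | hm
    · simpa [tcChar_zero] using (tcNorm_nonneg _).trans (hM 1 le_rfl)
    · exact (norm_tcChar_le hs ht _).trans (by linarith [hM m hm])
  · intro h
    obtain ⟨M₁, h₁⟩ := h 1 1 (.inl rfl) (.inl rfl)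
    obtain ⟨M₂, h₂⟩ := h 1 (-1) (.inl rfl) (.inr rfl)
    obtain ⟨M₃, h₃⟩ := h (-1) 1 (.inr rfl) (.inl rfl)
    obtain ⟨M₄, h₄⟩ := h (-1) (-1) (.inr rfl) (.inr rfl)
    refine ⟨max (max M₁ M₂) (max M₃ M₄), fun m _ => tcNorm_le_of_norm_tcChar_le ?_⟩
    rintro s t (rfl | rfl) (rfl | rfl) <;> rw [← horbit _ _ (by norm_num) (by norm_num)]
    · exact (h₁ m).trans (by simp)
    · exact (h₂ m).trans (by simp)
    · exact (h₃ m).trans (by simp)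
    · exact (h₄ m).trans (by simp)

section RealCubic

lemma sqrt_three_inv_pow_three : (1 / √3 : ℝ) ^ 3 = 1 / (3 * √3) := by
  rw [div_pow, one_pow, pow_succ, Real.sq_sqrt (by norm_num)]

lemma sub_le_cube_of_nonneg {x : ℝ} (hx : 0 ≤ x) : x - 2 / (3 * √3) ≤ x ^ 3 := by
  have h3 : √3 ^ 2 = 3 := Real.sq_sqrt (by norm_num)
  have hpos : 0 < √3 := by positivity
  have key : 0 ≤ (x - 1 / √3) ^ 2 * (x + 2 / √3) := by positivity
  have : (x - 1 / √3) ^ 2 * (x + 2 / √3) = x ^ 3 - x + 2 / (3 * √3) := by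
    field_simp
    linear_combination (3 * x * √3 - 2) * h3
  linarith

lemma abs_cube_add_le {a x : ℝ} (ha : |a| ≤ 2 / (3 * √3)) (hx : |x| ≤ 1 / √3) :
    |x ^ 3 + a| ≤ 1 / √3 :=
  calc |x ^ 3 + a| ≤ |x| ^ 3 + |a| := by rw [← abs_pow]; exact abs_add_le _ _
    _ ≤ (1 / √3) ^ 3 + 2 / (3 * √3) := by gcongr
    _ = 1 / √3 := by
      rw [sqrt_three_inv_pow_three]
      field_simp
      norm_num

lemma abs_iterate_cubic_le {a : ℝ} (ha : |a| ≤ 2 / (3 * √3)) (m : ℕ) :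
    |(fun x => x ^ 3 + a)^[m] 0| ≤ 1 / √3 := by
  induction m with
  | zero => simp
  | succ m ih => rw [Function.iterate_succ_apply']; exact abs_cube_add_le ha ih

lemma iterate_cubic_ge {a : ℝ} (ha : 2 / (3 * √3) < a) (m : ℕ) :
    m * (a - 2 / (3 * √3)) ≤ (fun x => x ^ 3 + a)^[m] 0 := by
  induction m with
  | zero => simp
  | succ m ih =>
    have hx : 0 ≤ (fun x => x ^ 3 + a)^[m] 0 :=
      (mul_nonneg m.cast_nonneg (sub_nonneg.2 ha.le)).trans ih
    rw [Function.iterate_succ_apply', Nat.cast_succ]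
    linarith [sub_le_cube_of_nonneg hx]

lemma iterate_cubic_neg (a : ℝ) (m : ℕ) :
    (fun x => x ^ 3 + -a)^[m] 0 = -(fun x => x ^ 3 + a)^[m] 0 := by
  have hodd : Function.Semiconj Neg.neg (fun x : ℝ => x ^ 3 + a) (fun x => x ^ 3 + -a) :=
    fun x => by ring
  simpa using ((hodd.iterate_right m) 0).symm

lemma exists_lt_abs_iterate_cubic {a : ℝ} (ha : 2 / (3 * √3) < |a|) (M : ℝ) :
    ∃ m : ℕ, M < |(fun x => x ^ 3 + a)^[m] 0| := by
  wlog hpos : 0 ≤ a generalizing a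
  · obtain ⟨m, hm⟩ := this (a := -a) (by rwa [abs_neg]) (by linarith)
    exact ⟨m, by rwa [iterate_cubic_neg, abs_neg] at hm⟩
  rw [abs_of_nonneg hpos] at ha
  obtain ⟨m, hm⟩ := exists_nat_gt (M / (a - 2 / (3 * √3)))
  refine ⟨m, lt_of_lt_of_le ?_ ((iterate_cubic_ge ha m).trans (le_abs_self _))⟩
  rwa [div_lt_iff₀ (sub_pos.2 ha)] at hm

lemma cubic_orbit_bounded_iff (a : ℝ) :
    (∃ M : ℝ, ∀ m : ℕ, |(fun x => x ^ 3 + a)^[m] 0| ≤ M) ↔ |a| ≤ 2 / (3 * √3) := by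
  refine ⟨fun ⟨M, hM⟩ => ?_, fun ha => ⟨1 / √3, abs_iterate_cubic_le ha⟩⟩
  by_contra! ha
  obtain ⟨m, hm⟩ := exists_lt_abs_iterate_cubic ha M
  exact (hM m).not_gt hm

lemma cubic_orbit_bounded_iff_ofReal (a : ℝ) :
    (∃ M : ℝ, ∀ m : ℕ, ‖(fun z : ℂ => z ^ 3 + a)^[m] 0‖ ≤ M) ↔ |a| ≤ 2 / (3 * √3) := by
  have hreal : Function.Semiconj ((↑) : ℝ → ℂ) (fun x => x ^ 3 + a) (fun z => z ^ 3 + a) :=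
    fun x => by push_cast; rfl
  have horbit (m : ℕ) : (fun z : ℂ => z ^ 3 + a)^[m] 0 = ((fun x => x ^ 3 + a)^[m] 0 : ℝ) := by
    simpa using ((hreal.iterate_right m) 0).symm
  simp only [horbit, Complex.norm_real, Real.norm_eq_abs]
  exact cubic_orbit_bounded_iff a

end RealCubic

lemma abs_add_abs_add_abs_le_iff {a b c r : ℝ} :
    (∀ s t : ℝ, (s = 1 ∨ s = -1) → (t = 1 ∨ t = -1) → |a + s * b + t * c| ≤ r) ↔
      |a| + |b| + |c| ≤ r := by
  constructor
  · intro h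
    have h₁ := abs_le.1 (h 1 1 (.inl rfl) (.inl rfl))
    have h₂ := abs_le.1 (h 1 (-1) (.inl rfl) (.inr rfl))
    have h₃ := abs_le.1 (h (-1) 1 (.inr rfl) (.inl rfl))
    have h₄ := abs_le.1 (h (-1) (-1) (.inr rfl) (.inr rfl))
    rcases abs_cases a with ⟨ha, _⟩ | ⟨ha, _⟩ <;> rcases abs_cases b with ⟨hb, _⟩ | ⟨hb, _⟩ <;>
      rcases abs_cases c with ⟨hc, _⟩ | ⟨hc, _⟩ <;> linarith
  · rintro h s t hs ht
    have habs {u : ℝ} (hu : u = 1 ∨ u = -1) : |u| = 1 := by rcases hu with rfl | rfl <;> simp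
    calc |a + s * b + t * c| ≤ |a| + |s * b| + |t * c| := abs_add_three _ _ _
      _ = |a| + |b| + |c| := by rw [abs_mul, abs_mul, habs hs, habs ht, one_mul, one_mul]
      _ ≤ r := h

lemma tcChar_perplex (s t c₁ c₄ c₆ : ℝ) :
    tcChar s t (((c₁ : ℂ), (c₄ : ℂ) * I), ((c₆ : ℂ) * I, 0)) =
      ((c₁ + s * c₄ + t * c₆ : ℝ) : ℂ) := by
  simp only [tcChar]
  push_cast
  linear_combination (-(s * c₄ + t * c₆) : ℂ) * I_sq

theorem perplexbric_is_octahedron (c₁ c₄ c₆ : ℝ) :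
    (∃ M : ℝ, ∀ m : ℕ, 1 ≤ m →
        tcNorm ((tcQ3 (((c₁ : ℂ), (c₄ : ℂ) * Complex.I),
          ((c₆ : ℂ) * Complex.I, 0)))^[m] ((0, 0), (0, 0))) ≤ M) ↔
      |c₁| + |c₄| + |c₆| ≤ 2 / (3 * Real.sqrt 3) := by
  refine (tcQ3_orbit_bounded_iff _).trans ?_
  rw [← abs_add_abs_add_abs_le_iff]
  refine forall₂_congr fun s t => forall₂_congr fun _ _ => ?_
  rw [tcChar_perplex, cubic_orbit_bounded_iff_ofReal]
end
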